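/- arXiv:math/0610735 — 3 statements merged into one kernel-verified Lean document; each statement's English description precedes it below -/
import Mathlib

section
/- Let n ≥ 2. The number of tuples (τ_{n−1},…,τ_1) of transpositions of {1,…,n} with τ_{n−1}∘⋯∘τ_1 = (1 2 ⋯ n) equals n^{n−2}. -/
/-!
Pitman's double counting. Call a list of directed edges `(a, b)` on `n` points coalescing if,
read from right to left, each edge hangs the root `b` of one tree of a rooted forest below a
vertex `a` of another tree; the trees are exactly the cycles of the product of the
transpositions `(a b)`. At step `j` there are `n (n - 1 - j)` choices, so there are
`n ^ (n - 1) (n - 1)!` coalescing lists of length `n - 1`, and each of them multiplies out to an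
`n`-cycle. Conversely, a transposition changes the number of cycles by one, so in a
factorization of an `n`-cycle into `n - 1` transpositions every factor merges two cycles; such a
factorization then lifts to exactly one coalescing list for each of the `n` possible final
roots. The `(n - 1)!` different `n`-cycles are conjugate, so they have equally many
factorizations `N`, and `n ^ (n - 1) (n - 1)! = (n - 1)! n N`.
-/

open Equiv Finset

namespace Equiv.Perm

variable {α : Type*} {σ : Perm α} {a b x y : α}

theorem SameCycle.induction_apply [Finite α] {p : α → Prop} (hxy : σ.SameCycle x y) (hx : p x)
    (hstep : ∀ z, p z → p (σ z)) : p y := by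
  obtain ⟨k, rfl⟩ := hxy.exists_nat_pow_eq
  clear hxy
  induction k with
  | zero => exact hx
  | succ k ih => rw [pow_succ', mul_apply]; exact hstep _ ih

variable [DecidableEq α]

theorem sameCycle_swap_apply (hab : σ.SameCycle a b) (z : α) : σ.SameCycle z (swap a b z) := by
  rcases eq_or_ne z a with rfl | hza
  · simpa using hab
  rcases eq_or_ne z b with rfl | hzb
  · simpa using hab.symm
  · rw [swap_apply_of_ne_of_ne hza hzb]

theorem SameCycle.of_swap_mul [Finite α] (hab : σ.SameCycle a b)
    (hxy : (swap a b * σ).SameCycle x y) : σ.SameCycle x y :=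
  hxy.induction_apply .rfl fun z hz => hz.trans <| by
    simpa [sameCycle_apply_right] using sameCycle_swap_apply hab (σ z)

section Finite

variable [Finite α]

/-- Starting from `a`, the permutation `swap a b * σ` runs through the `σ`-cycle of `a` and,
where `σ` would return to `a`, goes to `b` instead. -/
theorem sameCycle_swap_mul_of_not_sameCycle (h : ¬σ.SameCycle a b) :
    (swap a b * σ).SameCycle a b := by
  have hinv : σ.SameCycle a (σ.symm a) ∧ (swap a b * σ).SameCycle a (σ.symm a) := by
    refine (sameCycle_symm_apply_right.2 .rfl).induction_apply
      (p := fun z => σ.SameCycle a z ∧ (swap a b * σ).SameCycle a z) ⟨.rfl, .rfl⟩ ?_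
    rintro z ⟨hσ, hτ⟩
    refine ⟨sameCycle_apply_right.2 hσ, ?_⟩
    rcases eq_or_ne (σ z) a with hz | hza
    · rw [hz]
    have hzb : σ z ≠ b := fun hzb => h (hzb ▸ sameCycle_apply_right.2 hσ)
    simpa [swap_apply_of_ne_of_ne hza hzb] using sameCycle_apply_right.2 hτ
  simpa using sameCycle_apply_right.2 hinv.2

theorem sameCycle_swap_mul_iff (h : ¬σ.SameCycle a b) :
    (swap a b * σ).SameCycle x y ↔ σ.SameCycle x y ∨
      (σ.SameCycle x a ∨ σ.SameCycle x b) ∧ (σ.SameCycle y a ∨ σ.SameCycle y b) := by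
  have hab := sameCycle_swap_mul_of_not_sameCycle h
  constructor
  · refine fun hxy => hxy.induction_apply (p := fun z => σ.SameCycle x z ∨
      (σ.SameCycle x a ∨ σ.SameCycle x b) ∧ (σ.SameCycle z a ∨ σ.SameCycle z b))
      (Or.inl .rfl) fun z hz => ?_
    have hzσ : σ.SameCycle z (σ z) := sameCycle_apply_right.2 .rfl
    grind [mul_apply, SameCycle.trans, SameCycle.symm, SameCycle.refl]
  · have hσ {u v : α} (huv : σ.SameCycle u v) : (swap a b * σ).SameCycle u v :=
      hab.of_swap_mul (by rwa [swap_mul_self_mul])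
    rintro (hxy | ⟨hx, hy⟩)
    · exact hσ hxy
    · have hx' : (swap a b * σ).SameCycle x a := hx.elim hσ fun hx => (hσ hx).trans hab.symm
      have hy' : (swap a b * σ).SameCycle y a := hy.elim hσ fun hy => (hσ hy).trans hab.symm
      exact hx'.trans hy'.symm

end Finite

theorem cycleType_eq_singleton_card_iff [Fintype α] (h2 : 2 ≤ Fintype.card α) :
    σ.cycleType = {Fintype.card α} ↔ ∀ x y, σ.SameCycle x y := by
  constructor
  · intro h x y
    have hcycle : σ.IsCycle := card_cycleType_eq_one.1 (by simp [h])
    have hsupp : σ.support = univ :=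
      eq_univ_of_card _ (by rw [← sum_cycleType, h, Multiset.sum_singleton])
    exact hcycle.sameCycle (mem_support.1 (hsupp ▸ mem_univ x))
      (mem_support.1 (hsupp ▸ mem_univ y))
  · intro h
    obtain ⟨x, y, hxy⟩ := Fintype.exists_pair_of_one_lt_card h2
    have hmoved (z : α) : σ z ≠ z := fun hz =>
      hxy ((h z x).eq_of_left hz ▸ (h z y).eq_of_left hz)
    have hsupp : σ.support = univ := eq_univ_of_forall fun z => mem_support.2 (hmoved z)
    rw [IsCycle.cycleType ⟨x, hmoved x, fun y _ => h x y⟩, hsupp, card_univ]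

end Equiv.Perm

namespace Denes

open Equiv.Perm

section ListCount

variable {β : Type*} [Finite β]

theorem finite_of_length_eq {p : List β → Prop} {k : ℕ} (h : ∀ L, p L → L.length = k) :
    Finite {L // p L} :=
  Finite.of_injective (β := List.Vector β k) (fun L => ⟨L.1, h L.1 L.2⟩)
    fun _ _ hL => Subtype.ext (congrArg List.Vector.toList hL)

theorem card_list_eq_prod {p : List β → Prop} {q : List β → β → Prop} (hnil : p [])
    (hcons : ∀ e P, p (e :: P) ↔ p P ∧ q P e) {f : ℕ → ℕ}
    (hq : ∀ P, p P → Nat.card {e // q P e} = f P.length) (k : ℕ) :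
    Nat.card {P // p P ∧ P.length = k} = ∏ j ∈ range k, f j := by
  induction k with
  | zero =>
    rw [prod_range_zero, Nat.card_eq_one_iff_unique]
    refine ⟨⟨fun P Q => Subtype.ext ?_⟩, ⟨⟨[], hnil, rfl⟩⟩⟩
    rw [List.length_eq_zero_iff.1 P.2.2, List.length_eq_zero_iff.1 Q.2.2]
  | succ k ih =>
    have : Finite {P // p P ∧ P.length = k} := finite_of_length_eq fun _ h => h.2
    let cons (x : Σ P : {P // p P ∧ P.length = k}, {e // q P.1 e}) :
        {P // p P ∧ P.length = k + 1} :=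
      ⟨x.2.1 :: x.1.1, (hcons _ _).2 ⟨x.1.2.1, x.2.2⟩, by simp [x.1.2.2]⟩
    have hcons_bij : Function.Bijective cons := by
      constructor
      · rintro ⟨⟨P, hP⟩, e, he⟩ ⟨⟨Q, hQ⟩, e', he'⟩ h
        obtain ⟨rfl, rfl⟩ := List.cons_eq_cons.1 (congrArg Subtype.val h)
        rfl
      · rintro ⟨_ | ⟨e, P⟩, hP, hlen⟩
        · simp at hlen
        · have hP' := (hcons e P).1 hP
          exact ⟨⟨⟨P, hP'.1, by simpa using hlen⟩, e, hP'.2⟩, rfl⟩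
    have : Fintype {P // p P ∧ P.length = k} := Fintype.ofFinite _
    rw [← Nat.card_congr (Equiv.ofBijective cons hcons_bij), Nat.card_sigma,
      sum_congr rfl fun P _ => P.2.2 ▸ hq P.1 P.2.1, sum_const, card_univ, smul_eq_mul,
      ← Nat.card_eq_fintype_card, ih, prod_range_succ]

end ListCount

variable {α : Type*} [DecidableEq α]

def transpositions (P : List (α × α)) : List (Perm α) := P.map fun e => swap e.1 e.2

@[simp]
theorem transpositions_nil : transpositions ([] : List (α × α)) = [] := rfl

@[simp]
theorem transpositions_cons (e : α × α) (P : List (α × α)) :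
    transpositions (e :: P) = swap e.1 e.2 :: transpositions P := rfl

theorem eq_or_eq_swap_of_swap_eq {e f : α × α} (he : e.1 ≠ e.2)
    (h : swap e.1 e.2 = swap f.1 f.2) : f = e ∨ f = e.swap := by
  obtain ⟨a, b⟩ := e
  obtain ⟨c, d⟩ := f
  have h1 := congrArg (· a) h
  have h2 := congrArg (· c) h
  simp only [swap_apply_left] at h1 h2
  simp only [Prod.mk.injEq, Prod.swap_prod_mk]
  grind

variable [Fintype α] {σ : Perm α} {a b x y : α} {F : Finset α}

def orbitFinset (σ : Perm α) (x : α) : Finset α := {y | σ.SameCycle x y}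

@[simp]
theorem mem_orbitFinset : y ∈ orbitFinset σ x ↔ σ.SameCycle x y := by simp [orbitFinset]

theorem orbitFinset_eq_iff : orbitFinset σ x = orbitFinset σ y ↔ σ.SameCycle x y := by
  refine ⟨fun h => mem_orbitFinset.1 (h ▸ mem_orbitFinset.2 .rfl), fun h => ?_⟩
  ext z
  simp only [mem_orbitFinset]
  exact ⟨h.symm.trans, h.trans⟩

theorem orbitFinset_one : orbitFinset 1 x = {x} := by
  ext y
  simp [eq_comm]

theorem disjoint_orbitFinset (h : ¬σ.SameCycle a b) :
    Disjoint (orbitFinset σ a) (orbitFinset σ b) :=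
  disjoint_left.2 fun _ hza hzb =>
    h ((mem_orbitFinset.1 hza).trans (mem_orbitFinset.1 hzb).symm)

theorem orbitFinset_swap_mul (h : ¬σ.SameCycle a b) (x : α) :
    orbitFinset (swap a b * σ) x = if x ∈ orbitFinset σ a ∪ orbitFinset σ b then
      orbitFinset σ a ∪ orbitFinset σ b else orbitFinset σ x := by
  ext y
  split_ifs with hx <;> simp only [mem_union, mem_orbitFinset] at hx ⊢ <;>
    rw [sameCycle_swap_mul_iff h] <;> grind [SameCycle.trans, SameCycle.symm]

theorem orbitFinset_swap_mul_left (h : ¬σ.SameCycle a b) :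
    orbitFinset (swap a b * σ) a = orbitFinset σ a ∪ orbitFinset σ b := by
  rw [orbitFinset_swap_mul h, if_pos (mem_union_left _ (mem_orbitFinset.2 .rfl))]

def numOrbits (σ : Perm α) : ℕ := #(univ.image (orbitFinset σ))

theorem numOrbits_one : numOrbits (1 : Perm α) = Fintype.card α := by
  have : orbitFinset (1 : Perm α) = singleton := funext fun _ => orbitFinset_one
  rw [numOrbits, this, card_image_of_injective _ singleton_injective, card_univ]

theorem numOrbits_eq_one [Nonempty α] (h : ∀ x y, σ.SameCycle x y) : numOrbits σ = 1 := by
  have : univ.image (orbitFinset σ) = {univ} := by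
    ext O
    simp only [mem_image, mem_univ, true_and, mem_singleton]
    have horb : ∀ x, orbitFinset σ x = univ := fun x => by ext y; simp [h x y]
    exact ⟨fun ⟨x, hx⟩ => hx ▸ horb x,
      fun hO => ⟨Classical.arbitrary α, hO ▸ horb _⟩⟩
  rw [numOrbits, this, card_singleton]

theorem image_orbitFinset_eq_insert (a b : α) :
    univ.image (orbitFinset σ) = insert (orbitFinset σ a) (insert (orbitFinset σ b)
      (({x | x ∉ orbitFinset σ a ∪ orbitFinset σ b} : Finset α).image
        (orbitFinset σ))) := by
  ext O
  simp only [mem_image, mem_insert, mem_filter, mem_univ, true_and, mem_union, mem_orbitFinset]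
  constructor
  · rintro ⟨x, rfl⟩
    by_cases hx : σ.SameCycle a x ∨ σ.SameCycle b x
    · rcases hx with hx | hx
      · exact .inl (orbitFinset_eq_iff.2 hx.symm)
      · exact .inr (.inl (orbitFinset_eq_iff.2 hx.symm))
    · exact .inr (.inr ⟨x, hx, rfl⟩)
  · rintro (rfl | rfl | ⟨x, -, rfl⟩) <;> exact ⟨_, rfl⟩

theorem image_orbitFinset_swap_mul (h : ¬σ.SameCycle a b) :
    univ.image (orbitFinset (swap a b * σ)) = insert (orbitFinset σ a ∪ orbitFinset σ b)
      (({x | x ∉ orbitFinset σ a ∪ orbitFinset σ b} : Finset α).image (orbitFinset σ)) := by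
  ext O
  simp only [mem_image, mem_insert, mem_filter, mem_univ, true_and, orbitFinset_swap_mul h]
  constructor
  · rintro ⟨x, rfl⟩
    split_ifs with hx
    · exact .inl rfl
    · exact .inr ⟨x, hx, rfl⟩
  · rintro (rfl | ⟨x, hx, rfl⟩)
    · exact ⟨a, if_pos (mem_union_left _ (mem_orbitFinset.2 .rfl))⟩
    · exact ⟨x, if_neg hx⟩

theorem numOrbits_swap_mul (h : ¬σ.SameCycle a b) :
    numOrbits (swap a b * σ) + 1 = numOrbits σ := by
  set U := orbitFinset σ a ∪ orbitFinset σ b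
  have hnotR {O : Finset α} (hO : ∃ z ∈ U, z ∈ O) :
      O ∉ ({x | x ∉ U} : Finset α).image (orbitFinset σ) := by
    simp only [U, mem_image, mem_filter, mem_univ, true_and, not_exists, not_and]
    rintro x hx rfl
    obtain ⟨z, hz, hxz⟩ := hO
    simp only [U, mem_union, mem_orbitFinset] at hx hz hxz
    rcases hz with hz | hz
    · exact hx (.inl (hz.trans hxz.symm))
    · exact hx (.inr (hz.trans hxz.symm))
  have hab : orbitFinset σ a ≠ orbitFinset σ b := fun hab => h (orbitFinset_eq_iff.1 hab)
  have ha : a ∈ U := mem_union_left _ (mem_orbitFinset.2 .rfl)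
  have hb : b ∈ U := mem_union_right _ (mem_orbitFinset.2 .rfl)
  rw [numOrbits, numOrbits, image_orbitFinset_eq_insert (σ := σ) a b,
    image_orbitFinset_swap_mul h,
    card_insert_of_notMem (hnotR ⟨a, ha, ha⟩),
    card_insert_of_notMem fun hmem =>
      (mem_insert.1 hmem).elim hab (hnotR ⟨a, ha, mem_orbitFinset.2 .rfl⟩),
    card_insert_of_notMem (hnotR ⟨b, hb, mem_orbitFinset.2 .rfl⟩)]

theorem numOrbits_le_swap_mul (h : σ.SameCycle a b) :
    numOrbits σ ≤ numOrbits (swap a b * σ) := by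
  by_cases h' : (swap a b * σ).SameCycle a b
  · have : orbitFinset (swap a b * σ) = orbitFinset σ := by
      ext x y
      simp only [mem_orbitFinset]
      exact ⟨h.of_swap_mul, fun hxy => h'.of_swap_mul (by rwa [swap_mul_self_mul])⟩
    rw [numOrbits, numOrbits, this]
  · have := numOrbits_swap_mul h'
    rw [swap_mul_self_mul] at this
    omega

def IsMerging : List (Perm α) → Prop
  | [] => True
  | t :: L => IsMerging L ∧ ∃ a b, t = swap a b ∧ ¬L.prod.SameCycle a b

theorem card_le_numOrbits_add_length {L : List (Perm α)} (hL : ∀ τ ∈ L, τ.IsSwap) :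
    Fintype.card α ≤ numOrbits L.prod + L.length := by
  induction L with
  | nil => simp [numOrbits_one]
  | cons t L ih =>
    obtain ⟨a, b, -, rfl⟩ := hL t List.mem_cons_self
    have := ih fun τ hτ => hL τ (List.mem_cons_of_mem _ hτ)
    rw [List.prod_cons, List.length_cons]
    by_cases h : L.prod.SameCycle a b
    · have := numOrbits_le_swap_mul h
      omega
    · have := numOrbits_swap_mul h
      omega

theorem isMerging_of_numOrbits_add_length_eq {L : List (Perm α)} (hL : ∀ τ ∈ L, τ.IsSwap)
    (h : numOrbits L.prod + L.length = Fintype.card α) : IsMerging L := by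
  induction L with
  | nil => trivial
  | cons t L ih =>
    obtain ⟨a, b, -, rfl⟩ := hL t List.mem_cons_self
    have hL' : ∀ τ ∈ L, τ.IsSwap := fun τ hτ => hL τ (List.mem_cons_of_mem _ hτ)
    have := card_le_numOrbits_add_length hL'
    rw [List.prod_cons, List.length_cons] at h
    by_cases hab : L.prod.SameCycle a b
    · have := numOrbits_le_swap_mul hab
      omega
    · have := numOrbits_swap_mul hab
      exact ⟨ih hL' (by omega), a, b, rfl, hab⟩

theorem isMerging_of_forall_sameCycle {L : List (Perm α)} (hL : ∀ τ ∈ L, τ.IsSwap)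
    (hlen : L.length + 1 = Fintype.card α) (h : ∀ x y, L.prod.SameCycle x y) :
    IsMerging L := by
  have : Nonempty α := Fintype.card_pos_iff.1 (by omega)
  exact isMerging_of_numOrbits_add_length_eq hL (by rw [numOrbits_eq_one h]; omega)

def IsCycleTransversal (σ : Perm α) (F : Finset α) : Prop := ∀ x, #(F ∩ orbitFinset σ x) = 1

theorem IsCycleTransversal.inter_orbitFinset_self (hF : IsCycleTransversal σ F) (hx : x ∈ F) :
    F ∩ orbitFinset σ x = {x} := by
  obtain ⟨r, hr⟩ := card_eq_one.1 (hF x)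
  have : x ∈ F ∩ orbitFinset σ x := mem_inter.2 ⟨hx, mem_orbitFinset.2 .rfl⟩
  rw [hr, mem_singleton] at this
  rw [hr, this]

theorem isCycleTransversal_insert (h : ¬σ.SameCycle a b)
    (hF : IsCycleTransversal (swap a b * σ) F) (hFb : F ∩ orbitFinset σ b = ∅) :
    IsCycleTransversal σ (insert b F) := by
  have hb : b ∉ orbitFinset σ a := fun hb => h (mem_orbitFinset.1 hb)
  intro x
  by_cases hxa : σ.SameCycle a x
  · have hFa := hF a
    rw [orbitFinset_swap_mul_left h, inter_union_distrib_left, hFb, union_empty] at hFa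
    rwa [← orbitFinset_eq_iff.2 hxa, insert_inter_of_notMem hb]
  by_cases hxb : σ.SameCycle b x
  · rw [← orbitFinset_eq_iff.2 hxb, insert_inter_of_mem (mem_orbitFinset.2 .rfl), hFb,
      insert_empty, card_singleton]
  · have hFx := hF x
    rw [orbitFinset_swap_mul h, if_neg (by simp [hxa, hxb])] at hFx
    rwa [insert_inter_of_notMem fun hbx => hxb (mem_orbitFinset.1 hbx).symm]

def roots (P : List (α × α)) : Finset α := univ \ (P.map Prod.snd).toFinset

@[simp]
theorem roots_nil : roots ([] : List (α × α)) = univ := by simp [roots]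

theorem roots_cons (e : α × α) (P : List (α × α)) : roots (e :: P) = (roots P).erase e.2 := by
  ext x
  simp [roots, and_comm]

/-- Read from right to left, `P` builds a rooted forest with roots `roots P`: the edge `(a, b)`
hangs the root `b` of one tree below a vertex `a` of another. -/
def IsCoalescing : List (α × α) → Prop
  | [] => True
  | e :: P => IsCoalescing P ∧ e.2 ∈ roots P ∧ ¬(transpositions P).prod.SameCycle e.1 e.2

namespace IsCoalescing

variable {P : List (α × α)}

theorem card_roots (h : IsCoalescing P) : #(roots P) = Fintype.card α - P.length := by
  induction P with
  | nil => simp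
  | cons e P ih =>
    rw [roots_cons, card_erase_of_mem h.2.1, ih h.1, List.length_cons]
    omega

theorem isSwap (h : IsCoalescing P) : ∀ τ ∈ transpositions P, τ.IsSwap := by
  induction P with
  | nil => simp
  | cons e P ih =>
    simp only [transpositions_cons, List.mem_cons, forall_eq_or_imp]
    exact ⟨⟨e.1, e.2, fun he => h.2.2 (he ▸ .rfl), rfl⟩, ih h.1⟩

theorem isCycleTransversal (h : IsCoalescing P) :
    IsCycleTransversal (transpositions P).prod (roots P) := by
  induction P with
  | nil => simp [IsCycleTransversal, orbitFinset_one]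
  | cons e P ih =>
    obtain ⟨hP, hb, hab⟩ := h
    intro x
    rw [transpositions_cons, List.prod_cons, orbitFinset_swap_mul hab, roots_cons]
    split_ifs with hx
    · rw [inter_union_distrib_left, erase_inter, erase_inter,
        (ih hP).inter_orbitFinset_self hb, erase_singleton, union_empty,
        erase_eq_of_notMem fun h => hab (mem_orbitFinset.1 (mem_inter.1 h).2)]
      exact ih hP e.1
    · rw [erase_inter, erase_eq_of_notMem (by simp_all [sameCycle_comm])]
      exact ih hP x

theorem card_extensions (h : IsCoalescing P) :
    Nat.card {e : α × α // e.2 ∈ roots P ∧ ¬(transpositions P).prod.SameCycle e.1 e.2} =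
      Fintype.card α * (Fintype.card α - P.length - 1) := by
  set σ := (transpositions P).prod
  have hrow (a : α) : Nat.card {b // b ∈ roots P ∧ ¬σ.SameCycle a b} =
      Fintype.card α - P.length - 1 := by
    rw [Nat.card_congr (Equiv.subtypeEquivRight fun b => by simp :
        {b // b ∈ roots P ∧ ¬σ.SameCycle a b} ≃ {b // b ∈ roots P \ orbitFinset σ a}),
      Nat.card_eq_finsetCard, card_sdiff, inter_comm, h.isCycleTransversal a, h.card_roots]
  rw [Nat.card_congr (Equiv.subtypeProdEquivSigmaSubtype fun a b =>
      b ∈ roots P ∧ ¬σ.SameCycle a b),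
    Nat.card_sigma, sum_congr rfl fun a _ => hrow a, sum_const, card_univ, smul_eq_mul]

theorem sameCycle (h : IsCoalescing P) (hlen : P.length + 1 = Fintype.card α) (x y : α) :
    (transpositions P).prod.SameCycle x y := by
  obtain ⟨r, hr⟩ := card_eq_one.1 (h.card_roots.trans (by omega))
  have hroot (z : α) : (transpositions P).prod.SameCycle z r := by
    obtain ⟨s, hs⟩ := card_pos.1 ((h.isCycleTransversal z).symm ▸ Nat.one_pos)
    rw [hr, mem_inter, mem_singleton, mem_orbitFinset] at hs
    exact hs.1 ▸ hs.2
  exact (hroot x).trans (hroot y).symm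

/-- The new edge `(a, b)` uses up the root `b`, so no root is left in the old tree of `b`. -/
theorem roots_inter_orbitFinset_snd {e : α × α} (h : IsCoalescing (e :: P)) :
    roots (e :: P) ∩ orbitFinset (transpositions P).prod e.2 = ∅ := by
  rw [roots_cons, erase_inter, h.1.isCycleTransversal.inter_orbitFinset_self h.2.1,
    erase_singleton]

theorem eq_of_transpositions_eq {Q : List (α × α)} (hP : IsCoalescing P) (hQ : IsCoalescing Q)
    (hT : transpositions P = transpositions Q) (hR : roots P = roots Q) : P = Q := by
  induction P generalizing Q with
  | nil => exact (List.map_eq_nil_iff.1 hT.symm).symm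
  | cons e P ih =>
    obtain _ | ⟨f, Q⟩ := Q
    · simp at hT
    simp only [transpositions_cons, List.cons.injEq] at hT
    rcases eq_or_eq_swap_of_swap_eq (fun he => hP.2.2 (he ▸ .rfl)) hT.1 with rfl | rfl
    · refine congrArg _ (ih hP.1 hQ.1 hT.2 ?_)
      rw [← insert_erase hP.2.1, ← insert_erase hQ.2.1, ← roots_cons, ← roots_cons, hR]
    · -- With either orientation the merged tree would be left without a root.
      have hPσ := hP.roots_inter_orbitFinset_snd
      have hQσ := hQ.roots_inter_orbitFinset_snd
      have hroot := hP.isCycleTransversal e.1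
      rw [← hR, ← hT.2, Prod.snd_swap] at hQσ
      rw [transpositions_cons, List.prod_cons, orbitFinset_swap_mul_left hP.2.2,
        inter_union_distrib_left, hPσ, hQσ] at hroot
      simp at hroot

end IsCoalescing

theorem card_isCoalescing (k : ℕ) :
    Nat.card {P : List (α × α) // IsCoalescing P ∧ P.length = k} =
      ∏ j ∈ range k, Fintype.card α * (Fintype.card α - j - 1) :=
  card_list_eq_prod
    (q := fun P e => e.2 ∈ roots P ∧ ¬(transpositions P).prod.SameCycle e.1 e.2)
    trivial (fun _ _ => Iff.rfl) (fun _ h => h.card_extensions) k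

theorem card_isCoalescing_card_sub_one :
    Nat.card {P : List (α × α) // IsCoalescing P ∧ P.length = Fintype.card α - 1} =
      Fintype.card α ^ (Fintype.card α - 1) * (Fintype.card α - 1).factorial := by
  rw [card_isCoalescing, prod_mul_distrib, prod_const, card_range, ← Nat.descFactorial_self,
    Nat.descFactorial_eq_prod_range]
  congr 1
  exact prod_congr rfl fun j _ => by omega

theorem IsMerging.exists_isCoalescing {L : List (Perm α)} (hL : IsMerging L)
    (hF : IsCycleTransversal L.prod F) :
    ∃ P, IsCoalescing P ∧ transpositions P = L ∧ roots P = F := by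
  induction L generalizing F with
  | nil =>
    refine ⟨[], trivial, rfl, ?_⟩
    rw [roots_nil, eq_comm, eq_univ_iff_forall]
    intro x
    have hx := hF x
    rw [List.prod_nil, orbitFinset_one] at hx
    obtain ⟨y, hy⟩ := card_pos.1 (hx ▸ Nat.one_pos)
    rw [mem_inter, mem_singleton] at hy
    exact hy.2 ▸ hy.1
  | cons t L ih =>
    obtain ⟨hL, a, b, rfl, hab⟩ := hL
    rw [List.prod_cons] at hF
    have key {a b : α} (hab : ¬L.prod.SameCycle a b)
        (hF : IsCycleTransversal (swap a b * L.prod) F) (hFb : F ∩ orbitFinset L.prod b = ∅) :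
        ∃ P, IsCoalescing P ∧ transpositions P = swap a b :: L ∧ roots P = F := by
      obtain ⟨P, hP, rfl, hPF⟩ := ih hL (isCycleTransversal_insert hab hF hFb)
      have hbF : b ∉ F := fun hbF =>
        (eq_empty_iff_forall_notMem.1 hFb) b (mem_inter.2 ⟨hbF, mem_orbitFinset.2 .rfl⟩)
      exact ⟨(a, b) :: P, ⟨hP, hPF ▸ mem_insert_self b F, hab⟩, rfl,
        by rw [roots_cons, hPF, erase_insert hbF]⟩
    -- The root of the merged cycle lies on the side of `a` or on the side of `b`; the other
    -- endpoint is the target of the new edge.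
    have hroot := hF a
    rw [orbitFinset_swap_mul_left hab, inter_union_distrib_left,
      card_union_of_disjoint ((disjoint_orbitFinset hab).mono inter_subset_right
        inter_subset_right)] at hroot
    rcases Nat.add_eq_one_iff.1 hroot with ⟨hFa, -⟩ | ⟨-, hFb⟩
    · rw [swap_comm] at hF ⊢
      exact key (fun h => hab h.symm) hF (card_eq_zero.1 hFa)
    · exact key hab hF (card_eq_zero.1 hFb)

abbrev SwapFactorization (σ : Perm α) (k : ℕ) : Type _ :=
  {L : List (Perm α) // L.length = k ∧ (∀ τ ∈ L, τ.IsSwap) ∧ L.prod = σ}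

instance (σ : Perm α) (k : ℕ) : Finite (SwapFactorization σ k) :=
  finite_of_length_eq fun _ h => h.1

theorem card_swapFactorization_conj (g σ : Perm α) (k : ℕ) :
    Nat.card (SwapFactorization (g * σ * g⁻¹) k) = Nat.card (SwapFactorization σ k) := by
  refine Nat.card_congr (Equiv.subtypeEquiv (Equiv.listEquivOfEquiv (MulAut.conj g⁻¹).toEquiv)
    fun L => ?_)
  have hswap (τ : Perm α) : (MulAut.conj g⁻¹ τ).IsSwap ↔ τ.IsSwap := by
    rw [MulAut.conj_apply, isSwap_iff_cycleType, isSwap_iff_cycleType, cycleType_conj]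
  have hprod : MulAut.conj g⁻¹ L.prod = σ ↔ L.prod = g * σ * g⁻¹ := by
    rw [MulAut.conj_apply]
    constructor
    · rintro rfl
      group
    · intro h
      rw [h]
      group
  simp only [Equiv.listEquivOfEquiv, Equiv.coe_fn_mk, MulEquiv.toEquiv_eq_coe, EquivLike.coe_coe,
    List.length_map, List.forall_mem_map, hswap, ← map_list_prod, hprod]

theorem card_isCoalescing_prod_eq [Nonempty α] {c : Perm α} (hc : ∀ x y, c.SameCycle x y) :
    Nat.card {P : List (α × α) // (IsCoalescing P ∧ P.length = Fintype.card α - 1) ∧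
      (transpositions P).prod = c} =
      Fintype.card α * Nat.card (SwapFactorization c (Fintype.card α - 1)) := by
  have hn : 0 < Fintype.card α := Fintype.card_pos
  let f (P : {P : List (α × α) // (IsCoalescing P ∧ P.length = Fintype.card α - 1) ∧
      (transpositions P).prod = c}) :
      SwapFactorization c (Fintype.card α - 1) × {F : Finset α // #F = 1} :=
    (⟨transpositions P.1, by simp [transpositions, P.2.1.2], P.2.1.1.isSwap, P.2.2⟩,
      ⟨roots P.1, by rw [P.2.1.1.card_roots, P.2.1.2]; omega⟩)
  have hf : Function.Bijective f := by
    constructor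
    · intro P Q h
      simp only [f, Prod.mk.injEq, Subtype.mk.injEq] at h
      exact Subtype.ext (P.2.1.1.eq_of_transpositions_eq Q.2.1.1 h.1 h.2)
    · rintro ⟨⟨L, hlen, hswap, rfl⟩, F, hF⟩
      have horbit (x : α) : orbitFinset L.prod x = univ :=
        eq_univ_of_forall fun y => mem_orbitFinset.2 (hc x y)
      obtain ⟨P, hP, rfl, rfl⟩ :=
        (isMerging_of_forall_sameCycle hswap (by omega) hc).exists_isCoalescing
          fun x => by rwa [horbit, inter_univ]
      exact ⟨⟨P, ⟨hP, by simpa [transpositions] using hlen⟩, rfl⟩, rfl⟩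
  rw [Nat.card_congr (Equiv.ofBijective f hf), Nat.card_prod,
    Nat.card_eq_fintype_card (α := {F : Finset α // #F = 1}), Fintype.card_finset_len,
    Nat.choose_one_right, mul_comm]

theorem card_swapFactorization_of_cycleType_eq {c : Perm α} (h2 : 2 ≤ Fintype.card α)
    (hc : c.cycleType = {Fintype.card α}) :
    Nat.card (SwapFactorization c (Fintype.card α - 1)) =
      Fintype.card α ^ (Fintype.card α - 2) := by
  set n := Fintype.card α
  have : Nonempty α := Fintype.card_pos_iff.1 (by omega)
  have : Finite {P : List (α × α) // IsCoalescing P ∧ P.length = n - 1} :=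
    finite_of_length_eq fun _ h => h.2
  let prod (P : {P : List (α × α) // IsCoalescing P ∧ P.length = n - 1}) :
      {σ : Perm α // σ.cycleType = {n}} :=
    ⟨(transpositions P.1).prod,
      (cycleType_eq_singleton_card_iff h2).2 (P.2.1.sameCycle (by omega))⟩
  have hfiber (σ : {σ : Perm α // σ.cycleType = {n}}) :
      Nat.card {P // prod P = σ} = n * Nat.card (SwapFactorization c (n - 1)) := by
    obtain ⟨σ, hσ⟩ := σ
    obtain ⟨g, rfl⟩ := isConj_iff.1 (isConj_iff_cycleType_eq.2 (hc.trans hσ.symm))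
    rw [← card_swapFactorization_conj g c,
      ← card_isCoalescing_prod_eq ((cycleType_eq_singleton_card_iff h2).1 hσ),
      ← Nat.card_congr (Equiv.subtypeSubtypeEquivSubtypeInter _ _)]
    exact Nat.card_congr (Equiv.subtypeEquivRight fun P => Subtype.ext_iff)
  have hcycles : Nat.card {σ : Perm α // σ.cycleType = {n}} = (n - 1).factorial := by
    rw [Nat.card_eq_fintype_card, Fintype.card_subtype, card_of_cycleType_singleton h2 le_rfl,
      Nat.choose_self, mul_one]
  have hcount : n ^ (n - 1) * (n - 1).factorial =
      (n - 1).factorial * (n * Nat.card (SwapFactorization c (n - 1))) := by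
    rw [← card_isCoalescing_card_sub_one, ← hcycles,
      Nat.card_congr (Equiv.sigmaFiberEquiv prod).symm, Nat.card_sigma,
      sum_congr rfl fun σ _ => hfiber σ, sum_const, card_univ, smul_eq_mul,
      Nat.card_eq_fintype_card (α := {σ : Perm α // σ.cycleType = {n}})]
  have hT : n * Nat.card (SwapFactorization c (n - 1)) = n * n ^ (n - 2) := by
    rw [← pow_succ', show n - 2 + 1 = n - 1 by omega]
    exact Nat.eq_of_mul_eq_mul_left (Nat.factorial_pos _) (hcount.symm.trans (mul_comm _ _))
  exact Nat.eq_of_mul_eq_mul_left (by omega) hT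

end Denes

/-- the number of tuples `(τ_{n-1},…,τ_1)` of transpositions of `{1,…,n}`
with `τ_{n-1} ∘ ⋯ ∘ τ_1 = (1 2 ⋯ n)` equals `n^(n-2)`. -/
theorem stmt_5 (n : ℕ) (hn : 2 ≤ n) :
    Nat.card {L : List (Equiv.Perm (Fin n)) //
      L.length = n - 1 ∧ (∀ τ ∈ L, τ.IsSwap) ∧ L.prod = finRotate n} = n ^ (n - 2) := by
  have := Denes.card_swapFactorization_of_cycleType_eq (α := Fin n) (by simpa using hn)
    (by rw [Fintype.card_fin]; exact cycleType_finRotate_of_le hn)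
  rw [Fintype.card_fin] at this
  exact this
end

section
/- Let N ≥ 1, let a : ℤ/N → ℝ be any function, and let x ∈ ℝ be a real number not in the range of a. Let d = #{ i ∈ ℤ/N : a(i−1) ≥ a(i) } be the number of descents of the cyclic list (a(0),…,a(N−1)). Then there are exactly d indices i ∈ ℤ/N for which the cyclic triple ⟨a(i−1), x, a(i)⟩ is nondecreasing, i.e. for which ( a(i−1) < x and x < a(i) ) or ( x > a(i−1) and a(i−1) ≥ a(i) ) or ( a(i−1) ≥ a(i) and a(i) > x ). -/
/-!
Classify an index `i` by where `a (i - 1)` and `a i` lie relative to `x`. In each of the four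
cases one checks `[cyclic triple] + [x < a (i - 1)] = [descent] + [x < a i]`; summing over `i`,
the two sums of `[x < a ·]` agree because `i ↦ i - 1` is a bijection, and they cancel.
-/

open Finset

variable {ι α : Type*} [LinearOrder α]

/-- Some cyclic rotation of `(p, x, q)` is nondecreasing, the wrap-around step `p ≥ q` being weak. -/
def CyclicallyNondecreasing (p x q : α) : Prop :=
  (p < x ∧ x < q) ∨ (x > p ∧ p ≥ q) ∨ (p ≥ q ∧ q > x)

theorem ite_cyclicallyNondecreasing_add_ite_lt {p x q : α} (hp : p ≠ x) (hq : q ≠ x)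
    [Decidable (CyclicallyNondecreasing p x q)] :
    ((if CyclicallyNondecreasing p x q then 1 else 0) + if x < p then 1 else 0) =
      ((if q ≤ p then 1 else 0) + if x < q then 1 else 0 : ℕ) := by
  unfold CyclicallyNondecreasing at *
  rcases hp.lt_or_gt with hp | hp <;> rcases hq.lt_or_gt with hq | hq <;>
    split_ifs <;> grind

theorem card_cyclicallyNondecreasing_eq_card_le [Finite ι] (σ : Equiv.Perm ι) (a : ι → α)
    {x : α} (hx : x ∉ Set.range a) :
    Nat.card {i // CyclicallyNondecreasing (a (σ i)) x (a i)} = Nat.card {i // a i ≤ a (σ i)} := by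
  classical
  have := Fintype.ofFinite ι
  have hne : ∀ i, a i ≠ x := fun i h => hx ⟨i, h⟩
  have hsum := Finset.sum_congr (s₁ := univ) rfl
    fun i _ => ite_cyclicallyNondecreasing_add_ite_lt (hne (σ i)) (hne i)
  rw [sum_add_distrib, sum_add_distrib, Equiv.sum_comp σ fun i => if x < a i then 1 else 0]
    at hsum
  simp only [Nat.card_eq_fintype_card, Fintype.card_subtype, card_filter]
  exact Nat.add_right_cancel hsum

/-- cyclic lemma: let `a : ℤ/N → ℝ` and let `x ∈ ℝ` not be in the range of
`a`. Then the number of indices `i` for which the cyclic triple `⟨a(i-1), x, a(i)⟩` is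
nondecreasing equals the number `d` of descents of the cyclic list, i.e. of indices `i`
with `a(i-1) ≥ a(i)`. -/
theorem stmt_15 (N : ℕ) (hN : 1 ≤ N) (a : ZMod N → ℝ) (x : ℝ)
    (hx : x ∉ Set.range a) :
    Nat.card {i : ZMod N //
        (a (i - 1) < x ∧ x < a i) ∨
        (x > a (i - 1) ∧ a (i - 1) ≥ a i) ∨
        (a (i - 1) ≥ a i ∧ a i > x)} =
      Nat.card {i : ZMod N // a (i - 1) ≥ a i} := by
  have : NeZero N := ⟨by omega⟩
  exact card_cyclicallyNondecreasing_eq_card_le (Equiv.subRight 1) a hx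
end

section
/- Let n ≥ 1, r ≥ 0, and let σ_1,…,σ_r be permutations of {1,…,n} such that the subgroup they generate acts transitively on {1,…,n}; set π = σ_r∘⋯∘σ_1. Then there exists a nonnegative integer g (the genus) such that n·r − Σ_{j=1}^r c(σ_j) = n + c(π) − 2 + 2g; in particular, n·r − Σ_{j=1}^r c(σ_j) ≥ n + c(π) − 2. -/
/-- Number of orbits of a permutation of `{1,…,n}` (fixed points count as orbits). -/
noncomputable def orbCount {n : ℕ} (π : Equiv.Perm (Fin n)) : ℕ :=
  π.cycleType.card + (n - π.support.card)

/-!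
Write each `σ_j` as a product of `n - c(σ_j)` transpositions; concatenating these words gives a
word of `n r - Σ c(σ_j)` transpositions with product `π` that generates a transitive group.
Multiplying a permutation by a transposition `(a b)` changes its number of cycles by exactly one
(cut if `a`, `b` share a cycle, join otherwise), while adding `(a b)` to a set of generators
lowers the number of orbits by one exactly when `a`, `b` lie in different orbits, and then the
cycles must join. Induction along the word gives `n + c(π) ≤ (length) + 2 · (number of orbits)`,
and comparing signs shows that the difference, `2g`, is even.
-/

open Equiv Equiv.Perm MulAction Subgroup Function Finset

open Classical in
theorem Nat.card_eq_card_add_ite_of_surjective {A B : Type*} [Finite A] {f : A → B}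
    (hf : Surjective f) {a₀ b₀ : A}
    (hfib : ∀ p q, f p = f q ↔ p = q ∨ (p = a₀ ∨ p = b₀) ∧ (q = a₀ ∨ q = b₀)) :
    Nat.card A = Nat.card B + if a₀ = b₀ then 0 else 1 := by
  split_ifs with h
  · subst h
    refine Nat.card_eq_of_bijective f ⟨fun p q hpq => ?_, hf⟩
    rcases (hfib p q).1 hpq with rfl | ⟨rfl | rfl, rfl | rfl⟩ <;> rfl
  · have hbij : Bijective fun p : {p // p ≠ b₀} => f p := by
      refine ⟨fun p q hpq => Subtype.ext ?_, fun y => ?_⟩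
      · rcases (hfib p q).1 hpq with h | ⟨hp, hq⟩
        · exact h
        · rw [hp.resolve_right p.2, hq.resolve_right q.2]
      · obtain ⟨p, rfl⟩ := hf y
        by_cases hp : p = b₀
        · have hab : f a₀ = f b₀ := (hfib a₀ b₀).2 (Or.inr ⟨Or.inl rfl, Or.inr rfl⟩)
          exact ⟨⟨a₀, h⟩, hp ▸ hab⟩
        · exact ⟨⟨p, hp⟩, rfl⟩
    rw [← Nat.card_eq_of_bijective _ hbij, ← Finite.card_option,
      Nat.card_congr (optionSubtypeNe b₀)]

theorem neg_one_pow_eq_neg_one_pow_iff {m k : ℕ} :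
    (-1 : ℤˣ) ^ m = (-1) ^ k ↔ m % 2 = k % 2 := by
  rw [Int.units_pow_eq_pow_mod_two, Int.units_pow_eq_pow_mod_two (n := k)]
  rcases Nat.mod_two_eq_zero_or_one m with h | h <;>
    rcases Nat.mod_two_eq_zero_or_one k with h' | h' <;> simp [h, h']

theorem closure_pair_mul_left {G : Type*} [Group G] (g h : G) :
    closure {g, g * h} = closure {g, h} := by
  have hg {k : G} : g ∈ closure {g, k} := subset_closure (Set.mem_insert _ _)
  have hk {k : G} : k ∈ closure {g, k} := subset_closure (Set.mem_insert_of_mem _ rfl)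
  refine le_antisymm (closure_le _ |>.2 ?_) (closure_le _ |>.2 ?_) <;>
    rintro x (rfl | hx) <;> try rw [Set.mem_singleton_iff.1 hx]
  exacts [hg, mul_mem hg hk, hg, by simpa using mul_mem (inv_mem (hg (k := g * h))) hk]

variable {α : Type*}

theorem comp_eq_of_mem_closure {β : Type*} {S : Set (Perm α)} {k : α → β}
    (hS : ∀ g ∈ S, k ∘ g = k) {g : Perm α} (hg : g ∈ closure S) : k ∘ g = k := by
  induction hg using closure_induction with
  | mem g hg => exact hS g hg
  | one => rfl
  | mul g h _ _ hg hh => rw [coe_mul, ← comp_assoc, hg, hh]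
  | inv g _ hg => funext x; simpa using (congrFun hg (g⁻¹ x)).symm

noncomputable def orbitCount (H : Subgroup (Perm α)) : ℕ := Nat.card (orbitRel.Quotient H α)

theorem mem_orbit_iff_exists_mem {H : Subgroup (Perm α)} {x y : α} :
    x ∈ orbit H y ↔ ∃ g ∈ H, g y = x := by
  simp [mem_orbit_iff]

theorem orbitCount_le_one [Finite α] {H : Subgroup (Perm α)} (h : ∀ x y, ∃ g ∈ H, g x = y) :
    orbitCount H ≤ 1 :=
  Finite.card_le_one_iff_subsingleton.2
    ⟨Quotient.ind₂' fun x y => Quotient.eq''.2 (mem_orbit_iff_exists_mem.2 (h y x))⟩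

theorem orbitCount_le [Fintype α] (H : Subgroup (Perm α)) : orbitCount H ≤ Fintype.card α := by
  rw [← Nat.card_eq_fintype_card]
  exact Nat.card_le_card_of_surjective _ Quotient.mk''_surjective

theorem mem_orbit_closure_insert_swap_iff [DecidableEq α] {S : Set (Perm α)} {a b x y : α} :
    x ∈ orbit (closure (insert (swap a b) S)) y ↔ x ∈ orbit (closure S) y ∨
      (x ∈ orbit (closure S) a ∨ x ∈ orbit (closure S) b) ∧
        (y ∈ orbit (closure S) a ∨ y ∈ orbit (closure S) b) := by
  classical
  simp only [← orbitRel_apply, ← Quotient.eq'']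
  set q : α → orbitRel.Quotient (closure S) α := Quotient.mk''
  set q' : α → orbitRel.Quotient (closure (insert (swap a b) S)) α := Quotient.mk''
  constructor
  · intro h
    obtain ⟨g, hg, rfl⟩ := mem_orbit_iff_exists_mem.1 (orbitRel_apply.1 (Quotient.eq''.1 h))
    -- collapses the orbits of `a` and `b` to one point; every generator preserves it
    let k : α → Option (orbitRel.Quotient (closure S) α) := fun z =>
      if q z = q a ∨ q z = q b then none else some (q z)
    have hk : k ∘ g = k := by
      refine comp_eq_of_mem_closure (fun τ hτ => funext fun z => ?_) hg
      rcases hτ with rfl | hτ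
      · rcases eq_or_ne z a with rfl | hza
        · simp [k]
        rcases eq_or_ne z b with rfl | hzb
        · simp [k]
        · simp [k, swap_apply_of_ne_of_ne hza hzb]
      · have : q (τ z) = q z :=
          Quotient.eq''.2 (mem_orbit_iff_exists_mem.2 ⟨τ, subset_closure hτ, rfl⟩)
        simp only [comp_apply, k, this]
    have := congrFun hk y
    simp only [comp_apply, k] at this
    split_ifs at this <;> simp_all
  · have hmono : ∀ z w, q z = q w → q' z = q' w := fun z w h => by
      obtain ⟨g, hg, rfl⟩ := mem_orbit_iff_exists_mem.1 (orbitRel_apply.1 (Quotient.eq''.1 h))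
      exact Quotient.eq''.2 (mem_orbit_iff_exists_mem.2
        ⟨g, closure_mono (Set.subset_insert _ _) hg, rfl⟩)
    have hab : q' a = q' b := Quotient.eq''.2 (mem_orbit_iff_exists_mem.2
      ⟨swap a b, subset_closure (Set.mem_insert _ _), swap_apply_right a b⟩)
    have hmerge : ∀ z, q z = q a ∨ q z = q b → q' z = q' a := by
      rintro z (h | h)
      exacts [hmono _ _ h, (hmono _ _ h).trans hab.symm]
    rintro (h | ⟨hx, hy⟩)
    exacts [hmono _ _ h, (hmerge x hx).trans (hmerge y hy).symm]

open Classical in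
theorem orbitCount_closure_insert_swap [Finite α] [DecidableEq α] (S : Set (Perm α)) (a b : α) :
    orbitCount (closure S) = orbitCount (closure (insert (swap a b) S)) +
      if a ∈ orbit (closure S) b then 0 else 1 := by
  let f : orbitRel.Quotient (closure S) α →
      orbitRel.Quotient (closure (insert (swap a b) S)) α :=
    Quotient.map' id fun x y h => mem_orbit_closure_insert_swap_iff.2 (Or.inl h)
  have hfib : ∀ p q, f p = f q ↔
      p = q ∨ (p = .mk'' a ∨ p = .mk'' b) ∧ (q = .mk'' a ∨ q = .mk'' b) := by
    refine Quotient.ind₂' fun x y => ?_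
    simp only [Quotient.eq'', orbitRel_apply]
    exact Quotient.eq''.trans mem_orbit_closure_insert_swap_iff
  have hsurj : Function.Surjective f := Quotient.ind' fun x => ⟨.mk'' x, rfl⟩
  have := Nat.card_eq_card_add_ite_of_surjective hsurj hfib
  simpa only [orbitCount, Quotient.eq'', orbitRel_apply] using this

theorem mem_orbit_zpowers_iff {σ : Perm α} {x y : α} :
    x ∈ orbit (zpowers σ) y ↔ σ.SameCycle y x := by
  simp [mem_orbit_iff, SameCycle]; rfl

section Fintype

variable [Fintype α] [DecidableEq α]

theorem orbitCount_zpowers (σ : Perm α) :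
    orbitCount (zpowers σ) = Multiset.card σ.cycleType + (Fintype.card α - #σ.support) := by
  let key : α → Perm α ⊕ α := fun x =>
    if x ∈ σ.support then .inl (σ.cycleOf x) else .inr x
  have hker : ∀ x y, orbitRel (zpowers σ) α x y ↔ key x = key y := by
    intro x y
    rw [orbitRel_apply, mem_orbit_zpowers_iff]
    by_cases hx : x ∈ σ.support <;> by_cases hy : y ∈ σ.support
    · simp only [key, if_pos hx, if_pos hy, Sum.inl.injEq]
      exact (sameCycle_iff_cycleOf_eq_of_mem_support hy hx).trans eq_comm
    · simp only [key, if_pos hx, if_neg hy, reduceCtorEq, iff_false]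
      exact fun h => hy (h.mem_support_iff.2 hx)
    · simp only [key, if_neg hx, if_pos hy, reduceCtorEq, iff_false]
      exact fun h => hx (h.mem_support_iff.1 hy)
    · simp only [key, if_neg hx, if_neg hy, Sum.inr.injEq]
      exact ⟨fun h => (h.eq_of_right (notMem_support.1 hx)).symm, fun h => h ▸ .refl σ x⟩
  have hrange : univ.image key = σ.cycleFactorsFinset.disjSum σ.supportᶜ := by
    ext (c | x)
    · simp only [mem_image, mem_univ, true_and, inl_mem_disjSum, key]
      constructor
      · rintro ⟨x, hx⟩
        split_ifs at hx with hxσ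
        · exact Sum.inl_injective hx ▸ cycleOf_mem_cycleFactorsFinset_iff.2 hxσ
      · intro hc
        obtain ⟨x, hx⟩ := (mem_cycleFactorsFinset_iff.1 hc).1.nonempty_support
        refine ⟨x, ?_⟩
        rw [if_pos (mem_cycleFactorsFinset_support_le hc hx), ← cycle_is_cycleOf hx hc]
    · simp only [mem_image, mem_univ, true_and, inr_mem_disjSum, mem_compl, key]
      constructor
      · rintro ⟨y, hy⟩
        split_ifs at hy with hyσ
        · exact Sum.inr_injective hy ▸ hyσ
      · exact fun hx => ⟨x, if_neg hx⟩
  calc orbitCount (zpowers σ) = Nat.card (Set.range key) :=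
        Nat.card_congr ((Quotient.congrRight hker).trans (Setoid.quotientKerEquivRange key))
    _ = #(univ.image key) := by
      rw [← Set.ncard_coe_finset, coe_image, coe_univ, Set.image_univ, Nat.card_coe_set_eq]
    _ = _ := by rw [hrange, card_disjSum, card_compl, cycleType_def, Multiset.card_map]; rfl

theorem orbitCount_bot : orbitCount (⊥ : Subgroup (Perm α)) = Fintype.card α := by
  simpa using orbitCount_zpowers (1 : Perm α)

theorem sign_eq_neg_one_pow_orbitCount (σ : Perm α) :
    sign σ = (-1) ^ (Fintype.card α + orbitCount (zpowers σ)) := by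
  rw [sign_of_cycleType, orbitCount_zpowers, sum_cycleType, neg_one_pow_eq_neg_one_pow_iff]
  have := σ.support.card_le_univ
  omega

theorem orbitCount_zpowers_swap_mul_mod_two {a b : α} (hab : a ≠ b) (π : Perm α) :
    orbitCount (zpowers (swap a b * π)) % 2 ≠ orbitCount (zpowers π) % 2 := by
  have h := sign_mul (swap a b) π
  rw [sign_swap hab, sign_eq_neg_one_pow_orbitCount, sign_eq_neg_one_pow_orbitCount, ← pow_succ',
    neg_one_pow_eq_neg_one_pow_iff] at h
  omega

open Classical in
/-- Both `π` and `swap a b * π` generate together with `swap a b` the same group, whose orbit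
count differs from each of theirs by at most one; the sign decides which case occurs. -/
theorem orbitCount_zpowers_swap_mul {a b : α} (hab : a ≠ b) (π : Perm α) :
    orbitCount (zpowers (swap a b * π)) + (if a ∈ orbit (zpowers π) b then 0 else 2) =
      orbitCount (zpowers π) + 1 := by
  have h₁ := orbitCount_closure_insert_swap {π} a b
  have h₂ := orbitCount_closure_insert_swap {swap a b * π} a b
  rw [closure_pair_mul_left] at h₂
  rw [← zpowers_eq_closure] at h₁ h₂
  have := orbitCount_zpowers_swap_mul_mod_two hab π
  split_ifs at * <;> omega

theorem exists_isSwap_list_prod_eq (σ : Perm α) :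
    ∃ l : List (Perm α), (∀ τ ∈ l, τ.IsSwap) ∧ l.prod = σ ∧
      l.length + orbitCount (zpowers σ) = Fintype.card α := by
  induction hk : Fintype.card α - orbitCount (zpowers σ) using Nat.strong_induction_on
    generalizing σ with
  | _ k ih =>
    by_cases hσ : σ = 1
    · subst hσ
      exact ⟨[], by simp, rfl, by simp [orbitCount_bot]⟩
    obtain ⟨x, hx⟩ : ∃ x, σ x ≠ x := not_forall.1 fun h => hσ (Equiv.ext h)
    have hcut := orbitCount_zpowers_swap_mul hx σ
    rw [if_pos (mem_orbit_iff_exists_mem.2 ⟨σ, mem_zpowers σ, rfl⟩)] at hcut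
    have := orbitCount_le (zpowers (swap (σ x) x * σ))
    obtain ⟨l, hl, hprod, hlen⟩ := ih _ (by omega) (swap (σ x) x * σ) rfl
    refine ⟨swap (σ x) x :: l, ?_, by rw [List.prod_cons, hprod, swap_mul_self_mul], ?_⟩
    · rintro τ (_ | ⟨_, hτ⟩)
      exacts [⟨σ x, x, hx, rfl⟩, hl τ hτ]
    · rw [List.length_cons]
      omega

theorem exists_isSwap_list_prod_eq_prod (ls : List (Perm α)) :
    ∃ l : List (Perm α), (∀ τ ∈ l, τ.IsSwap) ∧ l.prod = ls.prod ∧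
      l.length + (ls.map fun σ => orbitCount (zpowers σ)).sum = Fintype.card α * ls.length ∧
      ∀ σ ∈ ls, σ ∈ closure {τ | τ ∈ l} := by
  induction ls with
  | nil => exact ⟨[], by simp, rfl, rfl, by simp⟩
  | cons σ ls ih =>
    obtain ⟨l₁, hl₁, hprod₁, hlen₁⟩ := exists_isSwap_list_prod_eq σ
    obtain ⟨l₂, hl₂, hprod₂, hlen₂, hmem₂⟩ := ih
    refine ⟨l₁ ++ l₂, List.forall_mem_append.2 ⟨hl₁, hl₂⟩, ?_, ?_, ?_⟩
    · rw [List.prod_append, hprod₁, hprod₂, List.prod_cons]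
    · rw [List.length_append, List.map_cons, List.sum_cons, List.length_cons, Nat.mul_succ]
      omega
    · rintro σ' (_ | ⟨_, hσ'⟩)
      · exact hprod₁ ▸ list_prod_mem fun τ hτ => subset_closure (List.mem_append_left _ hτ)
      · exact closure_mono (fun τ hτ => List.mem_append_right _ hτ) (hmem₂ σ' hσ')

theorem card_add_orbitCount_prod_le {l : List (Perm α)} (hl : ∀ τ ∈ l, τ.IsSwap) :
    Fintype.card α + orbitCount (zpowers l.prod) ≤
      l.length + 2 * orbitCount (closure {τ | τ ∈ l}) := by
  induction l with
  | nil => simp [orbitCount_bot, two_mul]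
  | cons τ l ih =>
    obtain ⟨a, b, hab, rfl⟩ := hl τ List.mem_cons_self
    have hins : {τ | τ ∈ swap a b :: l} = insert (swap a b) {τ | τ ∈ l} :=
      Set.ext fun _ => List.mem_cons
    have hmerge := orbitCount_closure_insert_swap {τ | τ ∈ l} a b
    have hcut := orbitCount_zpowers_swap_mul hab l.prod
    have hle : zpowers l.prod ≤ closure {τ | τ ∈ l} :=
      zpowers_le.2 (list_prod_mem fun τ hτ => subset_closure hτ)
    have hmono (h : a ∈ orbit (zpowers l.prod) b) : a ∈ orbit (closure {τ | τ ∈ l}) b := by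
      obtain ⟨g, hg, hgb⟩ := mem_orbit_iff_exists_mem.1 h
      exact mem_orbit_iff_exists_mem.2 ⟨g, hle hg, hgb⟩
    have := ih fun τ hτ => hl τ (List.mem_cons_of_mem _ hτ)
    rw [List.prod_cons, List.length_cons, hins]
    split_ifs at hmerge hcut <;> first | omega | exact absurd (hmono ‹_›) ‹_›

theorem orbitCount_prod_add_length_mod_two {l : List (Perm α)} (hl : ∀ τ ∈ l, τ.IsSwap) :
    (orbitCount (zpowers l.prod) + l.length) % 2 = Fintype.card α % 2 := by
  have h := sign_prod_list_swap hl
  rw [sign_eq_neg_one_pow_orbitCount, neg_one_pow_eq_neg_one_pow_iff] at h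
  omega

end Fintype

theorem orbCount_eq_orbitCount_zpowers {n : ℕ} (π : Perm (Fin n)) :
    orbCount π = orbitCount (zpowers π) := by
  rw [orbitCount_zpowers, Fintype.card_fin]
  rfl

theorem stmt_18_general (n r : ℕ) (σ : Fin r → Equiv.Perm (Fin n))
    (htrans : ∀ x y : Fin n, ∃ g ∈ Subgroup.closure (Set.range σ), g x = y) :
    (∃ g : ℕ, (n * r : ℤ) - ∑ j : Fin r, (orbCount (σ j) : ℤ) =
        (n : ℤ) + (orbCount ((List.ofFn σ).reverse.prod) : ℤ) - 2 + 2 * g) ∧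
      (n * r : ℤ) - ∑ j : Fin r, (orbCount (σ j) : ℤ) ≥
        (n : ℤ) + (orbCount ((List.ofFn σ).reverse.prod) : ℤ) - 2 := by
  obtain ⟨L, hswap, hprod, hlen, hmem⟩ := exists_isSwap_list_prod_eq_prod (List.ofFn σ).reverse
  have hconn : orbitCount (closure {τ | τ ∈ L}) ≤ 1 := by
    have hle : closure (Set.range σ) ≤ closure {τ | τ ∈ L} := closure_le _ |>.2 <|
      Set.range_subset_iff.2 fun j => hmem _ (List.mem_reverse.2 (List.mem_ofFn.2 ⟨j, rfl⟩))
    exact orbitCount_le_one fun x y => (htrans x y).imp fun g ⟨hg, hgx⟩ => ⟨hle hg, hgx⟩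
  have hle := card_add_orbitCount_prod_le hswap
  have hpar := orbitCount_prod_add_length_mod_two hswap
  simp only [Fintype.card_fin, hprod, List.map_reverse, List.sum_reverse, List.map_ofFn,
    List.sum_ofFn, List.length_reverse, List.length_ofFn, comp_apply] at hle hpar hlen
  simp only [orbCount_eq_orbitCount_zpowers, ← Nat.cast_sum, ← Nat.cast_mul]
  set c := orbitCount (zpowers (List.ofFn σ).reverse.prod)
  exact ⟨⟨(L.length + 2 - (n + c)) / 2, by omega⟩, by omega⟩

/-- if permutations `σ_1,…,σ_r` of `{1,…,n}` generate a transitive subgroup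
and `π = σ_r ∘ ⋯ ∘ σ_1`, then there is a nonnegative integer `g` (the genus) with
`n·r - Σ_j c(σ_j) = n + c(π) - 2 + 2g`; in particular `n·r - Σ_j c(σ_j) ≥ n + c(π) - 2`. -/
theorem stmt_18 (n r : ℕ) (hn : 1 ≤ n) (σ : Fin r → Equiv.Perm (Fin n))
    (htrans : ∀ x y : Fin n, ∃ g ∈ Subgroup.closure (Set.range σ), g x = y) :
    (∃ g : ℕ, (n * r : ℤ) - ∑ j : Fin r, (orbCount (σ j) : ℤ) =
        (n : ℤ) + (orbCount ((List.ofFn σ).reverse.prod) : ℤ) - 2 + 2 * g) ∧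
      (n * r : ℤ) - ∑ j : Fin r, (orbCount (σ j) : ℤ) ≥
        (n : ℤ) + (orbCount ((List.ofFn σ).reverse.prod) : ℤ) - 2 :=
  stmt_18_general n r σ htrans
end
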